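/- For all u > arccosh(3/2), with φ(u) = arccosh(cosh u − 1/2): log((1 + e^{−4u + 1/2 + 2φ(u)})/(1 + e^{2u − 1/2 − 2φ(u)})) + log((1 − e^{−u+φ(u)})/(1 − e^{−u−φ(u)})) + u < 0. -/

import Mathlib

noncomputable def arcosh (x : ℝ) : ℝ := Real.log (x + Real.sqrt (x ^ 2 - 1))

noncomputable def kappa : ℝ := arcosh (3 / 2)

noncomputable def phi (u : ℝ) : ℝ := arcosh (Real.cosh u - 1 / 2)

/-!
Write `C = exp u`, `c = exp (phi u)` and `q = exp (1 / 2)`. Since `cosh (phi u) = cosh u - 1 / 2`,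
`c + c⁻¹ = C + C⁻¹ - 1`, which gives `(C - c) * (C * c - 1) = C * c` and `c < C - 1`.
The second logarithm then equals `log ((C - c) ^ 2 / C)`, so the sum is the logarithm of
`q c² (C⁴ + q c²) (C - c)² / (C⁴ (q c² + C²))`, and the claim becomes a polynomial inequality.
It holds for `C > 2.61` (which is `u > kappa`, as `exp kappa = (3 + √5) / 2`), `1 < c < C - 1`
and `q < 1.65`, by bounding `q` by `1.65`, `c` by `C - 1`, and `C c - 1` below by `(161 / 261) C c`.
-/

open Real

lemma arcosh_eq_real_arcosh : _root_.arcosh = Real.arcosh := rfl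

lemma kappa_pos : 0 < kappa := Real.arcosh_pos (by norm_num)

lemma two_point_six_one_lt_exp_kappa : 2.61 < exp kappa := by
  rw [kappa, arcosh_eq_real_arcosh, Real.exp_arcosh (by norm_num)]
  have h : (1.11 : ℝ) < √((3 / 2) ^ 2 - 1) := by
    rw [Real.lt_sqrt (by norm_num)]; norm_num
  linarith

lemma exp_half_lt : exp (1 / 2) < 1.65 := by
  refine lt_of_pow_lt_pow_left₀ 2 (by norm_num) ?_
  rw [← exp_nat_mul]
  norm_num
  linarith [exp_one_lt_d9]

lemma one_lt_cosh_sub_half {u : ℝ} (hu : kappa < u) : 1 < cosh u - 1 / 2 := by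
  have h : cosh kappa < cosh u := by
    rw [cosh_lt_cosh, abs_of_pos kappa_pos, abs_of_pos (kappa_pos.trans hu)]
    exact hu
  rw [kappa, arcosh_eq_real_arcosh, cosh_arcosh (by norm_num)] at h
  linarith

lemma one_lt_exp_phi {u : ℝ} (hu : kappa < u) : 1 < exp (phi u) :=
  one_lt_exp_iff.2 (Real.arcosh_pos (one_lt_cosh_sub_half hu))

lemma exp_phi_add_inv {u : ℝ} (hu : kappa < u) :
    exp (phi u) + (exp (phi u))⁻¹ = exp u + (exp u)⁻¹ - 1 := by
  have h : cosh (phi u) = cosh u - 1 / 2 := cosh_arcosh (one_lt_cosh_sub_half hu).le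
  rw [cosh_eq, cosh_eq] at h
  rw [← exp_neg, ← exp_neg]
  linarith

section Algebra

variable {C c q : ℝ}

lemma sub_mul_mul_sub_one_eq (hC : C ≠ 0) (hc : c ≠ 0) (h : c + c⁻¹ = C + C⁻¹ - 1) :
    (C - c) * (C * c - 1) = C * c := by
  field_simp at h
  linear_combination -h

lemma lt_sub_one_of_add_inv_eq (hC : 2 < C) (hc : 1 < c) (h : c + c⁻¹ = C + C⁻¹ - 1) :
    c < C - 1 := by
  field_simp at h
  have key : C * (C - 1 - c) * ((C - 1) * c - 1) = c := by linear_combination (1 - C) * h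
  nlinarith [mul_pos (by linarith : (0 : ℝ) < C) (by nlinarith : (0 : ℝ) < (C - 1) * c - 1)]

lemma poly_lt_of_lt_sub_one (hC : 2.61 < C) (hc : 1 < c) (hcC : c < C - 1) (hq0 : 0 < q) (hq : q < 1.65) :
    q * c ^ 2 * C ^ 4 * (2 * C * c - 1) + q ^ 2 * C ^ 2 * c ^ 6 < C ^ 6 * (C * c - 1) ^ 2 := by
  have hC0 : 0 < C := by linarith
  have hc0 : 0 < c := by linarith
  have hc4 : c ^ 4 ≤ (C - 1) ^ 4 := pow_le_pow_left₀ hc0.le hcC.le 4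
  have hC_poly : 3.3 * C ^ 5 * (C - 1) + 2.7225 * C ^ 2 * (C - 1) ^ 4 ≤ (161 / 261) ^ 2 * C ^ 8 := by
    nlinarith [pow_pos hC0 2, pow_pos hC0 4, pow_pos hC0 6, mul_pos (pow_pos hC0 6) (sub_pos.2 hC)]
  calc q * c ^ 2 * C ^ 4 * (2 * C * c - 1) + q ^ 2 * C ^ 2 * c ^ 6
      < 1.65 * c ^ 2 * C ^ 4 * (2 * C * c - 1) + 1.65 ^ 2 * C ^ 2 * c ^ 6 := by
        have h2Cc : 0 < 2 * C * c - 1 := by nlinarith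
        have hq2 : q ^ 2 < 1.65 ^ 2 := pow_lt_pow_left₀ hq hq0.le two_ne_zero
        gcongr
    _ ≤ c ^ 2 * (3.3 * C ^ 5 * (C - 1) + 2.7225 * C ^ 2 * (C - 1) ^ 4) := by
        nlinarith [mul_le_mul_of_nonneg_left hc4 (by positivity : (0 : ℝ) ≤ C ^ 2 * c ^ 2),
          mul_le_mul_of_nonneg_left hcC.le (by positivity : (0 : ℝ) ≤ C ^ 5 * c ^ 2),
          (by positivity : (0 : ℝ) ≤ c ^ 2 * C ^ 4)]
    _ ≤ c ^ 2 * ((161 / 261) ^ 2 * C ^ 8) := by gcongr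
    _ = C ^ 6 * (161 / 261 * (C * c)) ^ 2 := by ring
    _ ≤ C ^ 6 * (C * c - 1) ^ 2 := by gcongr; nlinarith

lemma mul_sq_sub_lt (hId : (C - c) * (C * c - 1) = C * c)
    (hpoly : q * c ^ 2 * C ^ 4 * (2 * C * c - 1) + q ^ 2 * C ^ 2 * c ^ 6 < C ^ 6 * (C * c - 1) ^ 2) :
    q * c ^ 2 * (C ^ 4 + q * c ^ 2) * (C - c) ^ 2 < C ^ 4 * (q * c ^ 2 + C ^ 2) := by
  refine lt_of_mul_lt_mul_right ?_ (sq_nonneg (C * c - 1))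
  calc _ = q * c ^ 2 * (C ^ 4 + q * c ^ 2) * (C * c) ^ 2 := by
        linear_combination q * c ^ 2 * (C ^ 4 + q * c ^ 2) * ((C - c) * (C * c - 1) + C * c) * hId
    _ < _ := by linear_combination hpoly

lemma log_add_log_add_log_neg (hC : 2.61 < C) (hc : 1 < c) (h : c + c⁻¹ = C + C⁻¹ - 1)
    (hq0 : 0 < q) (hq : q < 1.65) :
    log ((1 + q * c ^ 2 / C ^ 4) / (1 + C ^ 2 / (q * c ^ 2)))
      + log ((1 - c / C) / (1 - 1 / (C * c))) + log C < 0 := by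
  have hC0 : 0 < C := by linarith
  have hc0 : 0 < c := by linarith
  have hId := sub_mul_mul_sub_one_eq hC0.ne' hc0.ne' h
  have hcC := lt_sub_one_of_add_inv_eq (by linarith) hc h
  have hsub : C - c ≠ 0 := by linarith
  have hA : (1 + q * c ^ 2 / C ^ 4) / (1 + C ^ 2 / (q * c ^ 2))
      = q * c ^ 2 * (C ^ 4 + q * c ^ 2) / (C ^ 4 * (q * c ^ 2 + C ^ 2)) := by
    field_simp
  have hB : (1 - c / C) / (1 - 1 / (C * c)) = (C - c) ^ 2 / C := by
    have hCc : C * c - 1 ≠ 0 := by nlinarith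
    rw [one_sub_div hC0.ne', one_sub_div (by positivity), div_div_div_eq,
      div_eq_div_iff (by positivity) hC0.ne']
    linear_combination -(C - c) * C * hId
  rw [hA, hB, ← log_mul (by positivity) (by positivity), ← log_mul (by positivity) hC0.ne']
  refine log_neg (by positivity) ?_
  rw [div_mul_div_comm, div_mul_eq_mul_div, mul_div_mul_right _ _ hC0.ne',
    div_lt_one (by positivity)]
  exact mul_sq_sub_lt hId (poly_lt_of_lt_sub_one hC hc hcC hq0 hq)

end Algebra

theorem log_log_u2 (u : ℝ) (hu : kappa < u) :
    Real.log ((1 + Real.exp (-4 * u + 1 / 2 + 2 * phi u))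
        / (1 + Real.exp (2 * u - 1 / 2 - 2 * phi u)))
      + Real.log ((1 - Real.exp (-u + phi u)) / (1 - Real.exp (-u - phi u))) + u < 0 := by
  have hC : 2.61 < exp u := two_point_six_one_lt_exp_kappa.trans (exp_lt_exp.2 hu)
  have e₁ : exp (-4 * u + 1 / 2 + 2 * phi u) = exp (1 / 2) * exp (phi u) ^ 2 / exp u ^ 4 := by
    rw [eq_div_iff (by positivity), ← exp_nat_mul, ← exp_nat_mul, ← exp_add, ← exp_add]
    ring_nf
  have e₂ : exp (2 * u - 1 / 2 - 2 * phi u) = exp u ^ 2 / (exp (1 / 2) * exp (phi u) ^ 2) := by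
    rw [eq_div_iff (by positivity), ← exp_nat_mul, ← exp_nat_mul, ← exp_add, ← exp_add]
    ring_nf
  have e₃ : exp (-u + phi u) = exp (phi u) / exp u := by rw [← exp_sub]; ring_nf
  have e₄ : exp (-u - phi u) = 1 / (exp u * exp (phi u)) := by
    rw [← exp_add, one_div, ← exp_neg]; ring_nf
  rw [e₁, e₂, e₃, e₄]
  simpa only [log_exp] using
    log_add_log_add_log_neg hC (one_lt_exp_phi hu) (exp_phi_add_inv hu) (exp_pos _) exp_half_lt
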